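/- arXiv:1506.03048 — 3 statements merged into one kernel-verified Lean document; each statement's English description precedes it below -/
import Mathlib

section
/- Let ξ_1, ξ_2, … be i.i.d. real random variables with E[ξ_1] ∈ (−∞, 0), and assume E[e^{uξ_1}] < ∞ for some u > 0. Then there exists a constant C < ∞ such that for all t > 0, E[Σ_{n=0}^{ν(t)−1} e^{−S_n}] ≤ C e^t, where S_0 = 0, S_n = ξ_1 + ⋯ + ξ_n, and ν(t) = inf{n ≥ 1 : S_n ≤ −t}. -/
/-
Write `G(t) = E[∑_{n < ν(t)} e^{-(t + Sₙ)}]`, i.e. `e^{-t}` times the quantity to be bounded: it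
sums `e^{-x}` along the walk `x = t + Sₙ` started at `t` and killed when it enters `(-∞, 0]`.
Conditioning on the first step gives the renewal equation `G(t) = e^{-t} + E[1{ξ > -t} G(t + ξ)]`,
and the same recursion links the truncations `G_N` (sum over `n < N`), with `G_0 = 0`. By
induction, every `G_N` lies below any supersolution `g` of this equation on `(0, ∞)`, hence so
does `G = sup_N G_N`.

A bounded supersolution is `g(t) = K (M + 1 - e^{-t})`, where `M ≥ 0` is so large that
`E[max(ξ, -M)] < 0` (dominated convergence, as `E[ξ] < 0`) and `K = -1 / E[max(ξ, -M)]`: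
from `e^{-x} ≥ 1 - x`, the integrand `1{x > -t} g(t + x)` is at most
`K (M + 1 - e^{-t}) + K e^{-t} max(x, -M)`, whose integral is `g(t) - e^{-t}`.
So `G ≤ K (M + 1)`, which gives the theorem with `C = K (M + 1)`.
-/

open MeasureTheory ProbabilityTheory Filter
open scoped ENNReal

/-- The first time `ν(t) = inf {n ≥ 1 : Sₙ ≤ -t}` the walk `Sₙ = ξ₁ + ⋯ + ξₙ` drops
below `-t` (with value `⊤` if this never happens). Here `ξ (i-1)` plays the role
of `ξ_i`, so `S n ω = ∑ i ∈ Finset.range n, ξ i ω`. -/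
noncomputable def firstDescentTime {Ω : Type*} (ξ : ℕ → Ω → ℝ) (t : ℝ) (ω : Ω) : ℕ∞ :=
  sInf {n : ℕ∞ | ∃ m : ℕ, n = m ∧ 1 ≤ m ∧ (∑ i ∈ Finset.range m, ξ i ω) ≤ -t}

open Finset Topology

namespace ProbabilityTheory

variable {Ω β : Type*} [MeasurableSpace Ω] [MeasurableSpace β] {μ : Measure Ω} {f : ℕ → Ω → β}

lemma iIndepFun.indepFun_head_tail (hf : ∀ i, Measurable (f i)) (h : iIndepFun f μ) :
    IndepFun (f 0) (fun ω i ↦ f (i + 1) ω) μ := by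
  have hST : Disjoint ({0} : Set ℕ) (Set.range Nat.succ) := by simp
  rw [IndepFun_iff_Indep]
  refine indep_of_indep_of_le (indep_iSup_of_disjoint (fun i ↦ (hf i).comap_le) h.iIndep hST)
    (le_iSup₂_of_le 0 rfl le_rfl) ?_
  simp_rw [MeasurableSpace.pi, MeasurableSpace.comap_iSup, MeasurableSpace.comap_comp]
  exact iSup_le fun i ↦ le_iSup₂_of_le (i + 1) ⟨i, rfl⟩ le_rfl

lemma iIndepFun.map_tail_eq_map [IsProbabilityMeasure μ] (hf : ∀ i, Measurable (f i))
    (h : iIndepFun f μ) (hident : ∀ i, IdentDistrib (f i) (f 0) μ μ) :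
    μ.map (fun ω i ↦ f (i + 1) ω) = μ.map (fun ω i ↦ f i ω) := by
  rw [(h.precomp Nat.succ_injective).map_fun_eq_infinitePi_map (fun i ↦ hf _),
    h.map_fun_eq_infinitePi_map hf]
  simp only [(hident _).map_eq]

lemma iIndepFun.lintegral_comp_head_tail [IsProbabilityMeasure μ] (hf : ∀ i, Measurable (f i))
    (h : iIndepFun f μ) (hident : ∀ i, IdentDistrib (f i) (f 0) μ μ)
    {Θ : β × (ℕ → β) → ℝ≥0∞} (hΘ : Measurable Θ) :
    ∫⁻ ω, Θ (f 0 ω, fun i ↦ f (i + 1) ω) ∂μ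
      = ∫⁻ x, ∫⁻ ω, Θ (x, fun i ↦ f i ω) ∂μ ∂(μ.map (f 0)) := by
  have htail : Measurable fun ω i ↦ f (i + 1) ω := measurable_pi_lambda _ fun i ↦ hf _
  rw [← lintegral_map hΘ ((hf 0).prodMk htail),
    (indepFun_iff_map_prod_eq_prod_map_map (hf 0).aemeasurable htail.aemeasurable).mp
      (h.indepFun_head_tail hf),
    lintegral_prod _ hΘ.aemeasurable, h.map_tail_eq_map hf hident]
  exact lintegral_congr fun x ↦
    lintegral_map (hΘ.comp measurable_prodMk_left) (measurable_pi_lambda _ hf)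

end ProbabilityTheory

open Classical in
noncomputable def descentWeight (t : ℝ) (n : ℕ) (y : ℕ → ℝ) : ℝ≥0∞ :=
  if ∀ m < n, -t < ∑ i ∈ range (m + 1), y i then
    ENNReal.ofReal (Real.exp (-(t + ∑ i ∈ range n, y i))) else 0

lemma descentWeight_zero (t : ℝ) (y : ℕ → ℝ) :
    descentWeight t 0 y = ENNReal.ofReal (Real.exp (-t)) := by
  simp [descentWeight]

lemma descentWeight_succ (t : ℝ) (n : ℕ) (y : ℕ → ℝ) :
    descentWeight t (n + 1) y =
      if -t < y 0 then descentWeight (t + y 0) n (fun i ↦ y (i + 1)) else 0 := by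
  have hstay : (∀ m < n + 1, -t < ∑ i ∈ range (m + 1), y i) ↔
      -t < y 0 ∧ ∀ m < n, -(t + y 0) < ∑ i ∈ range (m + 1), y (i + 1) := by
    rw [Nat.forall_lt_succ_left]
    refine and_congr (by simp) (forall₂_congr fun m _ ↦ ?_)
    rw [sum_range_succ' y (m + 1)]
    constructor <;> intro h <;> linarith
  have hexp : -(t + ∑ i ∈ range (n + 1), y i) = -(t + y 0 + ∑ i ∈ range n, y (i + 1)) := by
    rw [sum_range_succ']; ring
  unfold descentWeight
  rw [hexp]
  by_cases h0 : -t < y 0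
  · simp only [hstay, h0, true_and, if_true]
  · simp only [hstay, h0, false_and, if_false]

lemma sum_range_succ_descentWeight (N : ℕ) (t : ℝ) (y : ℕ → ℝ) :
    ∑ n ∈ range (N + 1), descentWeight t n y = ENNReal.ofReal (Real.exp (-t)) +
      if -t < y 0 then ∑ n ∈ range N, descentWeight (t + y 0) n (fun i ↦ y (i + 1)) else 0 := by
  rw [sum_range_succ', descentWeight_zero, add_comm]
  simp only [descentWeight_succ]
  split_ifs <;> simp

lemma measurable_descentWeight (n : ℕ) :
    Measurable fun p : ℝ × (ℕ → ℝ) ↦ descentWeight p.1 n p.2 := by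
  unfold descentWeight
  refine Measurable.ite ?_ (by fun_prop) measurable_const
  simp only [Set.ofPred_forall]
  exact MeasurableSet.iInter fun m ↦ MeasurableSet.iInter fun _ ↦
    measurableSet_lt (by fun_prop) (by fun_prop)

lemma lt_firstDescentTime_iff {Ω : Type*} (ξ : ℕ → Ω → ℝ) (t : ℝ) (ω : Ω) (n : ℕ) :
    (n : ℕ∞) < firstDescentTime ξ t ω ↔ ∀ m < n, -t < ∑ i ∈ range (m + 1), ξ i ω := by
  rw [firstDescentTime, ← ENat.add_one_le_iff (ENat.natCast_ne_top n), le_sInf_iff]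
  constructor
  · intro h m hm
    by_contra! hle
    have := h (m + 1 : ℕ) ⟨m + 1, rfl, by omega, hle⟩
    norm_cast at this
    omega
  · rintro h _ ⟨m, rfl, hm, hle⟩
    obtain ⟨k, rfl⟩ := Nat.exists_eq_add_of_le' hm
    by_contra! hlt
    norm_cast at hlt
    exact (h k (by omega)).not_ge hle

lemma ite_lt_firstDescentTime_eq {Ω : Type*} (ξ : ℕ → Ω → ℝ) (t : ℝ) (ω : Ω) (n : ℕ) :
    (if (n : ℕ∞) < firstDescentTime ξ t ω then
        ENNReal.ofReal (Real.exp (-(∑ i ∈ range n, ξ i ω))) else 0)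
      = descentWeight t n (fun i ↦ ξ i ω) * ENNReal.ofReal (Real.exp t) := by
  simp only [descentWeight, lt_firstDescentTime_iff]
  split_ifs
  · rw [← ENNReal.ofReal_mul (Real.exp_pos _).le, ← Real.exp_add]
    ring_nf
  · rw [zero_mul]

def IsRenewalSupersolution (ν : Measure ℝ) (g : ℝ → ℝ≥0∞) : Prop :=
  ∀ t, 0 < t →
    ENNReal.ofReal (Real.exp (-t)) + ∫⁻ x, (if -t < x then g (t + x) else 0) ∂ν ≤ g t

lemma exists_integral_max_neg_lt_zero {ν : Measure ℝ} (hi : Integrable id ν)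
    (hd : ∫ x, x ∂ν < 0) : ∃ M : ℝ, 0 ≤ M ∧ ∫ x, max x (-M) ∂ν < 0 := by
  have hlim : Tendsto (fun n : ℕ ↦ ∫ x, max x (-n) ∂ν) atTop (𝓝 (∫ x, x ∂ν)) := by
    refine tendsto_integral_of_dominated_convergence (fun x ↦ |x|)
      (fun n ↦ (measurable_id.max measurable_const).aestronglyMeasurable) hi.abs
      (fun n ↦ ae_of_all _ fun x ↦ ?_) (ae_of_all _ fun x ↦ ?_)
    · rw [Real.norm_eq_abs, abs_le]
      constructor <;> cases max_cases x (-(n : ℝ)) <;> cases abs_cases x <;>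
        linarith [n.cast_nonneg (α := ℝ)]
    · refine tendsto_const_nhds.congr' ((eventually_ge_atTop ⌈-x⌉₊).mono fun n hn ↦ ?_)
      have : -x ≤ n := (Nat.le_ceil _).trans (by exact_mod_cast hn)
      exact (max_eq_left (by linarith)).symm
  obtain ⟨n, hn⟩ := (hlim.eventually (gt_mem_nhds hd)).exists
  exact ⟨n, n.cast_nonneg, hn⟩

lemma isRenewalSupersolution_of_mul_integral_max_le {ν : Measure ℝ} [IsProbabilityMeasure ν]
    {M K : ℝ} (hM : 0 ≤ M) (hK : 0 ≤ K) (hint : Integrable (fun x ↦ max x (-M)) ν)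
    (hKM : K * ∫ x, max x (-M) ∂ν ≤ -1) :
    IsRenewalSupersolution ν fun t ↦ ENNReal.ofReal (K * (M + 1 - Real.exp (-t))) := by
  intro t ht
  set s := Real.exp (-t)
  have hs0 : 0 < s := Real.exp_pos _
  have hs1 : s ≤ 1 := Real.exp_le_one_iff.mpr (by linarith)
  have hKs : 0 ≤ K * s := mul_nonneg hK hs0.le
  set f : ℝ → ℝ := fun x ↦ K * (M + 1 - s) + K * s * max x (-M)
  have hf_nonneg : ∀ x, 0 ≤ f x := fun x ↦ by
    have := mul_le_mul_of_nonneg_left (le_max_right x (-M)) hKs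
    nlinarith [mul_nonneg hK (mul_nonneg (by linarith : 0 ≤ M + 1) (sub_nonneg.mpr hs1))]
  have hf_int : Integrable f ν := (integrable_const _).add (hint.const_mul _)
  have hf_integral : ∫ x, f x ∂ν = K * (M + 1 - s) + K * s * ∫ x, max x (-M) ∂ν := by
    simp [f, integral_add (integrable_const _) (hint.const_mul _), integral_const_mul]
  have hle_f : ∀ x, (if -t < x then ENNReal.ofReal (K * (M + 1 - Real.exp (-(t + x)))) else 0)
      ≤ ENNReal.ofReal (f x) := fun x ↦ by
    split_ifs
    · refine ENNReal.ofReal_le_ofReal ?_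
      rw [neg_add, Real.exp_add]
      have h1 := mul_le_mul_of_nonneg_left (Real.add_one_le_exp (-x)) hKs
      have h2 := mul_le_mul_of_nonneg_left (le_max_left x (-M)) hKs
      simp only [f]
      nlinarith
    · exact zero_le
  calc ENNReal.ofReal s + ∫⁻ x, (if -t < x then
          ENNReal.ofReal (K * (M + 1 - Real.exp (-(t + x)))) else 0) ∂ν
      ≤ ENNReal.ofReal s + ∫⁻ x, ENNReal.ofReal (f x) ∂ν :=
        add_le_add_right (lintegral_mono hle_f) _
    _ = ENNReal.ofReal (s + ∫ x, f x ∂ν) := by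
        rw [← ofReal_integral_eq_lintegral_ofReal hf_int (ae_of_all _ hf_nonneg),
          ENNReal.ofReal_add hs0.le (integral_nonneg hf_nonneg)]
    _ ≤ ENNReal.ofReal (K * (M + 1 - s)) := by
        refine ENNReal.ofReal_le_ofReal ?_
        have := mul_le_mul_of_nonneg_left hKM hs0.le
        rw [hf_integral]
        nlinarith

section Renewal

variable {Ω : Type*} [MeasurableSpace Ω] {μ : Measure Ω} [IsProbabilityMeasure μ]
  {ξ : ℕ → Ω → ℝ}

lemma measurable_descentWeight_comp (hmeas : ∀ i, Measurable (ξ i)) (t : ℝ) (n : ℕ) :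
    Measurable fun ω ↦ descentWeight t n (fun i ↦ ξ i ω) :=
  (measurable_descentWeight n).comp (measurable_const.prodMk (measurable_pi_lambda _ hmeas))

lemma lintegral_sum_range_succ_descentWeight (hmeas : ∀ i, Measurable (ξ i))
    (hindep : iIndepFun ξ μ) (hident : ∀ i, IdentDistrib (ξ i) (ξ 0) μ μ) (N : ℕ) (t : ℝ) :
    ∫⁻ ω, ∑ n ∈ range (N + 1), descentWeight t n (fun i ↦ ξ i ω) ∂μ =
      ENNReal.ofReal (Real.exp (-t)) + ∫⁻ x, (if -t < x then
        ∫⁻ ω, ∑ n ∈ range N, descentWeight (t + x) n (fun i ↦ ξ i ω) ∂μ else 0) ∂(μ.map (ξ 0)) := by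
  have hΘ : Measurable fun p : ℝ × (ℕ → ℝ) ↦
      if -t < p.1 then ∑ n ∈ range N, descentWeight (t + p.1) n p.2 else 0 :=
    Measurable.ite (measurableSet_lt measurable_const measurable_fst)
      (Finset.measurable_sum _ fun n _ ↦ (measurable_descentWeight n).comp
        (f := fun p : ℝ × (ℕ → ℝ) ↦ (t + p.1, p.2)) (by fun_prop))
      measurable_const
  simp_rw [sum_range_succ_descentWeight]
  rw [lintegral_add_left measurable_const, lintegral_const, measure_univ, mul_one,
    hindep.lintegral_comp_head_tail hmeas hident hΘ]
  congr 1
  refine lintegral_congr fun x ↦ ?_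
  split_ifs <;> simp

lemma lintegral_sum_range_descentWeight_le (hmeas : ∀ i, Measurable (ξ i))
    (hindep : iIndepFun ξ μ) (hident : ∀ i, IdentDistrib (ξ i) (ξ 0) μ μ) {g : ℝ → ℝ≥0∞}
    (hg : IsRenewalSupersolution (μ.map (ξ 0)) g) (N : ℕ) {t : ℝ} (ht : 0 < t) :
    ∫⁻ ω, ∑ n ∈ range N, descentWeight t n (fun i ↦ ξ i ω) ∂μ ≤ g t := by
  induction N generalizing t with
  | zero => simp
  | succ N ih =>
    rw [lintegral_sum_range_succ_descentWeight hmeas hindep hident]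
    refine le_trans (add_le_add_right (lintegral_mono fun x ↦ ?_) _) (hg t ht)
    split_ifs with hx
    · exact ih (by linarith)
    · exact le_rfl

lemma lintegral_tsum_descentWeight_le (hmeas : ∀ i, Measurable (ξ i))
    (hindep : iIndepFun ξ μ) (hident : ∀ i, IdentDistrib (ξ i) (ξ 0) μ μ) {g : ℝ → ℝ≥0∞}
    (hg : IsRenewalSupersolution (μ.map (ξ 0)) g) {t : ℝ} (ht : 0 < t) :
    ∫⁻ ω, ∑' n, descentWeight t n (fun i ↦ ξ i ω) ∂μ ≤ g t := by
  have hw := measurable_descentWeight_comp hmeas t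
  rw [lintegral_tsum fun n ↦ (hw n).aemeasurable, ENNReal.tsum_eq_iSup_nat]
  refine iSup_le fun N ↦ ?_
  rw [← lintegral_finsetSum _ fun n _ ↦ hw n]
  exact lintegral_sum_range_descentWeight_le hmeas hindep hident hg N ht

end Renewal

theorem expected_exp_sum_before_descent_general
    {Ω : Type*} [MeasurableSpace Ω] (μ : Measure Ω) [IsProbabilityMeasure μ]
    (ξ : ℕ → Ω → ℝ) (hmeas : ∀ i, Measurable (ξ i))
    (hindep : iIndepFun ξ μ)
    (hident : ∀ i, IdentDistrib (ξ i) (ξ 0) μ μ)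
    (hint : Integrable (ξ 0) μ) (hdrift : ∫ ω, ξ 0 ω ∂μ < 0) :
    ∃ C : ℝ≥0∞, C < ⊤ ∧ ∀ t : ℝ, 0 < t →
      (∫⁻ ω, ∑' n : ℕ,
          (if (n : ℕ∞) < firstDescentTime ξ t ω then
            ENNReal.ofReal (Real.exp (-(∑ i ∈ Finset.range n, ξ i ω))) else 0) ∂μ)
        ≤ C * ENNReal.ofReal (Real.exp t) := by
  set ν := μ.map (ξ 0)
  have : IsProbabilityMeasure ν := Measure.isProbabilityMeasure_map (hmeas 0).aemeasurable
  have hν_int : Integrable id ν :=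
    (integrable_map_measure aestronglyMeasurable_id (hmeas 0).aemeasurable).mpr hint
  have hν_drift : ∫ x, x ∂ν < 0 := by
    rwa [integral_map (f := fun x ↦ x) (hmeas 0).aemeasurable aestronglyMeasurable_id]
  obtain ⟨M, hM, hneg⟩ := exists_integral_max_neg_lt_zero hν_int hν_drift
  set K := -(∫ x, max x (-M) ∂ν)⁻¹
  have hK : 0 ≤ K := by simp only [K, neg_nonneg, inv_nonpos, hneg.le]
  have hKM : K * ∫ x, max x (-M) ∂ν = -1 := by simp [K, hneg.ne]
  have hsuper := isRenewalSupersolution_of_mul_integral_max_le hM hK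
    (hν_int.sup (integrable_const _)) hKM.le
  refine ⟨ENNReal.ofReal (K * (M + 1)), ENNReal.ofReal_lt_top, fun t ht ↦ ?_⟩
  simp_rw [ite_lt_firstDescentTime_eq, ENNReal.tsum_mul_right]
  rw [lintegral_mul_const' _ _ ENNReal.ofReal_ne_top]
  gcongr
  refine (lintegral_tsum_descentWeight_le hmeas hindep hident hsuper ht).trans ?_
  gcongr
  nlinarith [Real.exp_pos (-t)]

/-- **Exponential bound before descent.** Let `ξ₁, ξ₂, …` be i.i.d. with
`E[ξ₁] ∈ (-∞, 0)` and `E[e^{u ξ₁}] < ∞` for some `u > 0`. Then there is a constant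
`C < ∞` such that `E[∑_{n=0}^{ν(t)-1} e^{-Sₙ}] ≤ C e^t` for all `t > 0`. -/
theorem expected_exp_sum_before_descent
    {Ω : Type*} [MeasurableSpace Ω] (μ : Measure Ω) [IsProbabilityMeasure μ]
    (ξ : ℕ → Ω → ℝ) (hmeas : ∀ i, Measurable (ξ i))
    (hindep : iIndepFun ξ μ)
    (hident : ∀ i, IdentDistrib (ξ i) (ξ 0) μ μ)
    (hint : Integrable (ξ 0) μ) (hdrift : ∫ ω, ξ 0 ω ∂μ < 0)
    (u : ℝ) (hu : 0 < u)
    (hexp : ∫⁻ ω, ENNReal.ofReal (Real.exp (u * ξ 0 ω)) ∂μ < ⊤) :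
    ∃ C : ℝ≥0∞, C < ⊤ ∧ ∀ t : ℝ, 0 < t →
      (∫⁻ ω, ∑' n : ℕ,
          (if (n : ℕ∞) < firstDescentTime ξ t ω then
            ENNReal.ofReal (Real.exp (-(∑ i ∈ Finset.range n, ξ i ω))) else 0) ∂μ)
        ≤ C * ENNReal.ofReal (Real.exp t) :=
  expected_exp_sum_before_descent_general μ ξ hmeas hindep hident hint hdrift
end

section
/- Let ρ : {1,2,3,…} → (0,∞) be a sequence such that lim_{n→∞} (1/n) Σ_{j=1}^n log ρ_j = −c₀ for some c₀ ∈ (0,∞). Then R_m := Σ_{k=m}^∞ Π_{m,k} < ∞ for every m ≥ 1, and moreover Σ_{n=1}^∞ Π_{1,n} R_{n+1} (1 + R_{n+1}) < ∞, where Π_{i,j} = ∏_{x=i}^j ρ_x. -/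
open Filter
open scoped Topology

set_option maxHeartbeats 1000000

/-- **Deterministic summability from a logarithmic drift.** Let `ρ : ℕ → (0,∞)` (indexed
from `1`) satisfy `(1/n) ∑_{j=1}^n log ρ_j → -c₀` with `c₀ ∈ (0,∞)`. Then
`R_m = ∑_{k=m}^∞ Π_{m,k} < ∞` for every `m ≥ 1` (i.e. the series is summable), and
moreover `∑_{n=1}^∞ Π_{1,n} R_{n+1} (1 + R_{n+1}) < ∞`, where `Π_{i,j} = ∏_{x=i}^j ρ_x`. -/
theorem summable_of_log_cesaro_neg
    (ρ : ℕ → ℝ) (hpos : ∀ x, 1 ≤ x → 0 < ρ x)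
    (c₀ : ℝ) (hc₀ : 0 < c₀)
    (hlln : Tendsto
      (fun n : ℕ => (1 / (n : ℝ)) * ∑ j ∈ Finset.Icc 1 n, Real.log (ρ j))
      atTop (𝓝 (-c₀))) :
    (∀ m : ℕ, 1 ≤ m → Summable (fun k : ℕ => ∏ x ∈ Finset.Icc m (m + k), ρ x)) ∧
      Summable (fun n : ℕ =>
        (∏ x ∈ Finset.Icc 1 (n + 1), ρ x) *
          (∑' k : ℕ, ∏ x ∈ Finset.Icc (n + 2) (n + 2 + k), ρ x) *
          (1 + ∑' k : ℕ, ∏ x ∈ Finset.Icc (n + 2) (n + 2 + k), ρ x)) := by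
  set S : ℕ → ℝ := fun n => ∑ j ∈ Finset.Icc 1 n, Real.log (ρ j) with hSdef
  -- the basic product identity
  have hprod : ∀ p k : ℕ, ∏ x ∈ Finset.Icc (p + 1) (p + 1 + k), ρ x
      = Real.exp (S (p + 1 + k)) / Real.exp (S p) := by
    intro p k
    have h1 : ∀ j : ℕ, S j = ∑ x ∈ Finset.Ioc 0 j, Real.log (ρ x) := by
      intro j
      simp only [hSdef]
      rw [show (1 : ℕ) = 0 + 1 from rfl, Finset.Icc_add_one_left_eq_Ioc]
    have h2 : (∑ x ∈ Finset.Ioc 0 p, Real.log (ρ x))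
        + ∑ x ∈ Finset.Ioc p (p + 1 + k), Real.log (ρ x)
        = ∑ x ∈ Finset.Ioc 0 (p + 1 + k), Real.log (ρ x) :=
      Finset.sum_Ioc_consecutive _ (Nat.zero_le p) (by omega)
    have h3 : ∏ x ∈ Finset.Icc (p + 1) (p + 1 + k), ρ x
        = Real.exp (∑ x ∈ Finset.Icc (p + 1) (p + 1 + k), Real.log (ρ x)) := by
      rw [Real.exp_sum]
      refine Finset.prod_congr rfl fun x hx => ?_
      have hx1 : 1 ≤ x := le_trans (Nat.succ_le_succ (Nat.zero_le p))
        (Finset.mem_Icc.mp hx).1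
      exact (Real.exp_log (hpos x hx1)).symm
    rw [h3, ← Real.exp_sub]
    congr 1
    rw [h1, h1, Finset.Icc_add_one_left_eq_Ioc]
    linarith [h2]
  set r : ℝ := Real.exp (-(3 * c₀ / 4)) with hrdef
  set q : ℝ := Real.exp (-(5 * c₀ / 4)) with hqdef
  set s : ℝ := Real.exp (-(c₀ / 4)) with hsdef2
  have hr0 : 0 < r := Real.exp_pos _
  have hq0 : 0 < q := Real.exp_pos _
  have hs0 : 0 < s := Real.exp_pos _
  have hr1 : r < 1 := by rw [hrdef, Real.exp_lt_one_iff]; linarith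
  have hs1 : s < 1 := by rw [hsdef2, Real.exp_lt_one_iff]; linarith
  have hrs : r ≤ s := Real.exp_le_exp.mpr (by linarith)
  have hr2sq : r ^ 2 = s * q := by
    rw [hrdef, hsdef2, hqdef, ← Real.exp_add, sq, ← Real.exp_add]
    ring_nf
  -- upper bound: ∃ C > 0, exp (S n) ≤ C * r ^ n
  have hCex : ∃ C : ℝ, 0 < C ∧ ∀ n : ℕ, Real.exp (S n) ≤ C * r ^ n := by
    have h1 : ∀ᶠ n : ℕ in atTop, (1 / (n : ℝ)) * S n ≤ -(3 * c₀ / 4) :=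
      hlln.eventually_le_const (by linarith)
    obtain ⟨N, hN⟩ := eventually_atTop.mp h1
    set M : ℕ := max N 1 with hMdef
    have hup : ∀ n : ℕ, M ≤ n → Real.exp (S n) ≤ r ^ n := by
      intro n hn
      have hn1 : 1 ≤ n := le_trans (le_max_right N 1) hn
      have hn0 : (0 : ℝ) < n := by exact_mod_cast hn1
      have h := hN n (le_trans (le_max_left N 1) hn)
      have hSn : S n ≤ -(3 * c₀ / 4) * n := by
        have := mul_le_mul_of_nonneg_left h hn0.le
        rw [show (n : ℝ) * ((1 / n) * S n) = S n by field_simp] at this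
        linarith
      calc Real.exp (S n) ≤ Real.exp (-(3 * c₀ / 4) * n) := Real.exp_le_exp.mpr hSn
        _ = r ^ n := by rw [hrdef, ← Real.exp_nat_mul]; ring_nf
    refine ⟨1 + ∑ i ∈ Finset.range M, Real.exp (S i) / r ^ i, by positivity, fun n => ?_⟩
    by_cases hn : M ≤ n
    · calc Real.exp (S n) ≤ r ^ n := hup n hn
        _ ≤ (1 + ∑ i ∈ Finset.range M, Real.exp (S i) / r ^ i) * r ^ n := by
            nlinarith [pow_pos hr0 n,
              Finset.sum_nonneg (fun i (_ : i ∈ Finset.range M) =>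
                div_nonneg (Real.exp_pos (S i)).le (pow_pos hr0 i).le)]
    · push_neg at hn
      have hmem : n ∈ Finset.range M := Finset.mem_range.mpr hn
      have h1 : Real.exp (S n) / r ^ n
          ≤ ∑ i ∈ Finset.range M, Real.exp (S i) / r ^ i :=
        Finset.single_le_sum (fun i _ => div_nonneg (Real.exp_pos (S i)).le
          (pow_pos hr0 i).le) hmem
      have hrn : (0 : ℝ) < r ^ n := pow_pos hr0 n
      rw [div_le_iff₀ hrn] at h1
      nlinarith
  -- lower bound: ∃ c > 0, c * q ^ n ≤ exp (S n)
  have hcex : ∃ c : ℝ, 0 < c ∧ ∀ n : ℕ, c * q ^ n ≤ Real.exp (S n) := by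
    have h1 : ∀ᶠ n : ℕ in atTop, -(5 * c₀ / 4) ≤ (1 / (n : ℝ)) * S n :=
      hlln.eventually_const_le (by linarith)
    obtain ⟨N, hN⟩ := eventually_atTop.mp h1
    set M : ℕ := max N 1 with hMdef
    have hlow : ∀ n : ℕ, M ≤ n → q ^ n ≤ Real.exp (S n) := by
      intro n hn
      have hn1 : 1 ≤ n := le_trans (le_max_right N 1) hn
      have hn0 : (0 : ℝ) < n := by exact_mod_cast hn1
      have h := hN n (le_trans (le_max_left N 1) hn)
      have hSn : -(5 * c₀ / 4) * n ≤ S n := by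
        have := mul_le_mul_of_nonneg_left h hn0.le
        rw [show (n : ℝ) * ((1 / n) * S n) = S n by field_simp] at this
        linarith
      calc q ^ n = Real.exp (-(5 * c₀ / 4) * n) := by
            rw [hqdef, ← Real.exp_nat_mul]; ring_nf
        _ ≤ Real.exp (S n) := Real.exp_le_exp.mpr hSn
    have hne : (Finset.range M).Nonempty :=
      Finset.nonempty_range_iff.mpr (by omega)
    refine ⟨min 1 ((Finset.range M).inf' hne fun i => Real.exp (S i) / q ^ i),
      lt_min one_pos ((Finset.lt_inf'_iff hne).mpr fun i _ =>
        div_pos (Real.exp_pos _) (pow_pos hq0 i)), fun n => ?_⟩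
    by_cases hn : M ≤ n
    · calc min 1 ((Finset.range M).inf' hne fun i => Real.exp (S i) / q ^ i) * q ^ n
          ≤ 1 * q ^ n := by
            exact mul_le_mul_of_nonneg_right (min_le_left _ _) (pow_pos hq0 n).le
        _ = q ^ n := one_mul _
        _ ≤ Real.exp (S n) := hlow n hn
    · push_neg at hn
      have h1 : ((Finset.range M).inf' hne fun i => Real.exp (S i) / q ^ i)
          ≤ Real.exp (S n) / q ^ n :=
        Finset.inf'_le _ (Finset.mem_range.mpr hn)
      have hqn : (0 : ℝ) < q ^ n := pow_pos hq0 n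
      calc min 1 ((Finset.range M).inf' hne fun i => Real.exp (S i) / q ^ i) * q ^ n
          ≤ (Real.exp (S n) / q ^ n) * q ^ n := by
            exact mul_le_mul_of_nonneg_right (le_trans (min_le_right _ _) h1) hqn.le
        _ = Real.exp (S n) := by field_simp
  obtain ⟨C, hC0, hC⟩ := hCex
  obtain ⟨c, hc0, hc⟩ := hcex
  -- first part
  have part1 : ∀ m : ℕ, 1 ≤ m →
      Summable (fun k : ℕ => ∏ x ∈ Finset.Icc m (m + k), ρ x) := by
    intro m hm
    obtain ⟨p, rfl⟩ : ∃ p, m = p + 1 := ⟨m - 1, by omega⟩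
    have hnn : ∀ k : ℕ, 0 ≤ ∏ x ∈ Finset.Icc (p + 1) (p + 1 + k), ρ x :=
      fun k => Finset.prod_nonneg fun x hx =>
        (hpos x (le_trans (Nat.succ_le_succ (Nat.zero_le p)) (Finset.mem_Icc.mp hx).1)).le
    have hle : ∀ k : ℕ, ∏ x ∈ Finset.Icc (p + 1) (p + 1 + k), ρ x
        ≤ (C * r ^ (p + 1) / Real.exp (S p)) * r ^ k := by
      intro k
      rw [hprod p k]
      have h1 := hC (p + 1 + k)
      have hE : (0 : ℝ) < Real.exp (S p) := Real.exp_pos _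
      rw [div_le_iff₀ hE]
      calc Real.exp (S (p + 1 + k)) ≤ C * r ^ (p + 1 + k) := h1
        _ = C * r ^ (p + 1) / Real.exp (S p) * r ^ k * Real.exp (S p) := by
            rw [pow_add]; field_simp
    exact Summable.of_nonneg_of_le hnn hle
      ((summable_geometric_of_lt_one hr0.le hr1).mul_left _)
  refine ⟨part1, ?_⟩
  -- second part
  set R : ℕ → ℝ := fun n => ∑' k : ℕ, ∏ x ∈ Finset.Icc (n + 2) (n + 2 + k), ρ x with hRdef
  have hRnonneg : ∀ n, 0 ≤ R n := fun n =>
    tsum_nonneg fun k => Finset.prod_nonneg fun x hx =>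
      (hpos x (by have := (Finset.mem_Icc.mp hx).1; omega)).le
  have hRle : ∀ n : ℕ, R n ≤ C * r ^ (n + 2) / ((1 - r) * Real.exp (S (n + 1))) := by
    intro n
    have hsum := part1 (n + 2) (by omega)
    have hgs : Summable (fun k : ℕ =>
        (C * r ^ (n + 2) / Real.exp (S (n + 1))) * r ^ k) :=
      (summable_geometric_of_lt_one hr0.le hr1).mul_left _
    have hle : ∀ k : ℕ, ∏ x ∈ Finset.Icc (n + 2) (n + 2 + k), ρ x
        ≤ (C * r ^ (n + 2) / Real.exp (S (n + 1))) * r ^ k := by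
      intro k
      have := hprod (n + 1) k
      rw [show n + 1 + 1 = n + 2 from rfl] at this
      rw [this]
      have hE : (0 : ℝ) < Real.exp (S (n + 1)) := Real.exp_pos _
      rw [div_le_iff₀ hE]
      calc Real.exp (S (n + 2 + k)) ≤ C * r ^ (n + 2 + k) := hC _
        _ = C * r ^ (n + 2) / Real.exp (S (n + 1)) * r ^ k * Real.exp (S (n + 1)) := by
            rw [pow_add]; field_simp
    calc R n ≤ ∑' k : ℕ, (C * r ^ (n + 2) / Real.exp (S (n + 1))) * r ^ k :=
          Summable.tsum_le_tsum hle hsum hgs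
      _ = (C * r ^ (n + 2) / Real.exp (S (n + 1))) * (1 - r)⁻¹ := by
          rw [tsum_mul_left, tsum_geometric_of_lt_one hr0.le hr1]
      _ = C * r ^ (n + 2) / ((1 - r) * Real.exp (S (n + 1))) := by
          have h1r' : (1 : ℝ) - r ≠ 0 := by intro h; rw [sub_eq_zero] at h; exact hr1.ne h.symm
          field_simp
  have hprodTop : ∀ n : ℕ, ∏ x ∈ Finset.Icc 1 (n + 1), ρ x = Real.exp (S (n + 1)) := by
    intro n
    have := hprod 0 n
    rw [show 0 + 1 + n = n + 1 by omega] at this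
    simpa [hSdef] using this
  have h1r : (0 : ℝ) < 1 - r := by linarith
  set K : ℝ := C * r ^ 2 / (1 - r) + C ^ 2 * r ^ 4 / ((1 - r) ^ 2 * c * q) with hKdef
  refine Summable.of_nonneg_of_le (fun n => ?_) (fun n => ?_)
    ((summable_geometric_of_lt_one hs0.le hs1).mul_left K)
  · have hE : (0 : ℝ) < Real.exp (S (n + 1)) := Real.exp_pos _
    have := hRnonneg n
    rw [hprodTop n]
    positivity
  · rw [hprodTop n]
    set E : ℝ := Real.exp (S (n + 1)) with hEdef
    have hE : (0 : ℝ) < E := Real.exp_pos _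
    have hT0 : 0 ≤ R n := hRnonneg n
    have hT : R n ≤ C * r ^ (n + 2) / ((1 - r) * E) := hRle n
    have hElow : c * q ^ (n + 1) ≤ E := hc (n + 1)
    have h1 : E * R n ≤ C * r ^ (n + 2) / (1 - r) := by
      have := mul_le_mul_of_nonneg_left hT hE.le
      calc E * R n ≤ E * (C * r ^ (n + 2) / ((1 - r) * E)) := this
        _ = C * r ^ (n + 2) / (1 - r) := by field_simp
    have h2 : E * R n * R n ≤ (C * r ^ (n + 2) / (1 - r)) ^ 2 / (c * q ^ (n + 1)) := by
      have step : E * R n * R n ≤ (C * r ^ (n + 2) / (1 - r)) *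
          (C * r ^ (n + 2) / ((1 - r) * E)) := by
        have hA : 0 ≤ C * r ^ (n + 2) / (1 - r) := by positivity
        exact mul_le_mul h1 hT hT0 hA
      have step2 : (C * r ^ (n + 2) / (1 - r)) * (C * r ^ (n + 2) / ((1 - r) * E))
          = (C * r ^ (n + 2) / (1 - r)) ^ 2 / E := by
        field_simp
      have step3 : (C * r ^ (n + 2) / (1 - r)) ^ 2 / E
          ≤ (C * r ^ (n + 2) / (1 - r)) ^ 2 / (c * q ^ (n + 1)) := by
        apply div_le_div_of_nonneg_left (by positivity) (by positivity) hElow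
      linarith [step, step2 ▸ step, step3]
    have hpow : (r ^ n) ^ 2 = s ^ n * q ^ n := by
      calc (r ^ n) ^ 2 = (r ^ 2) ^ n := by rw [← pow_mul, ← pow_mul, Nat.mul_comm]
        _ = (s * q) ^ n := by rw [hr2sq]
        _ = s ^ n * q ^ n := mul_pow s q n
    have key : (C * r ^ (n + 2) / (1 - r)) ^ 2 / (c * q ^ (n + 1))
        = C ^ 2 * r ^ 4 / ((1 - r) ^ 2 * c * q) * s ^ n := by
      have hq' : q ^ (n + 1) = q * q ^ n := by rw [pow_succ]; ring
      have hr' : r ^ (n + 2) = r ^ n * r ^ 2 := by rw [pow_add]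
      have hA : (r ^ (n + 2)) ^ 2 = s ^ n * q ^ n * r ^ 4 := by
        rw [hr', mul_pow, hpow]; ring
      have h1r' : (1 : ℝ) - r ≠ 0 := ne_of_gt h1r
      rw [div_pow, mul_pow, hA, hq']
      field_simp
    have hgeom : C * r ^ (n + 2) / (1 - r) ≤ C * r ^ 2 / (1 - r) * s ^ n := by
      have : r ^ (n + 2) = r ^ n * r ^ 2 := by rw [pow_add]
      rw [this]
      have hsn : r ^ n ≤ s ^ n := pow_le_pow_left₀ hr0.le hrs n
      rw [div_mul_eq_mul_div, div_le_div_iff₀ h1r h1r]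
      have hmul := mul_le_mul_of_nonneg_left hsn
        (by positivity : (0 : ℝ) ≤ C * r ^ 2 * (1 - r))
      nlinarith [hmul]
    have expand : E * R n * (1 + R n) = E * R n + E * R n * R n := by ring
    rw [expand, hKdef]
    have h2' : E * R n * R n ≤ C ^ 2 * r ^ 4 / ((1 - r) ^ 2 * c * q) * s ^ n := by
      rw [← key]; exact h2
    calc E * R n + E * R n * R n
        ≤ C * r ^ 2 / (1 - r) * s ^ n + C ^ 2 * r ^ 4 / ((1 - r) ^ 2 * c * q) * s ^ n := by
          have := le_trans h1 hgeom
          linarith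
      _ = (C * r ^ 2 / (1 - r) + C ^ 2 * r ^ 4 / ((1 - r) ^ 2 * c * q)) * s ^ n := by ring
end

section
/- Let (ρ_x)_{x≥1} be i.i.d. strictly positive random variables with E[log ρ_1] ∈ (−∞, 0), and suppose there is a constant C > 0 such that P(R_1 ≥ t) ≥ C/t for all t ≥ 1, where R_m = Σ_{k=m}^∞ Π_{m,k} and Π_{i,j} = ∏_{x=i}^j ρ_x. Then for every n ≥ 1, E[ Π_{1,n} R_{n+1}² / (1 + R_1)² ] ≥ (C/4) · E[ 1/(1 + R_1) ] > 0. -/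
/-!
Write `1 + R_1 = T + P W` with `P = Π_{1,n}`, `T = 1 + R_{1,n}` and `W = R_{n+1}`, so that
`(P, T)` is independent of `W` and `W` has the law of `R_1`. On the event `P W ≥ T` we have
`1 + R_1 ≤ 2 P W`, hence `P W² / (1 + R_1)² ≥ 1 / (4 P)`. Conditioning on `(P, T)` and using
`P(W ≥ T / P) ≥ C P / T` (note `T / P ≥ 1`) gives the lower bound `(C / 4) E[1 / T]`, and
`T ≤ 1 + R_1`. Positivity holds because `R_1 < ∞` a.s., by the strong law of large numbers
applied to `log ρ_x`.
-/

open MeasureTheory ProbabilityTheory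
open scoped ENNReal

/-- The tail series `R_m = ∑_{k=m}^∞ Π_{m,k}` (valued in `ℝ≥0∞`), where
`Π_{i,j} = ρ_i ⋯ ρ_j`. Here `ρ (j-1)` plays the role of `ρ_j`, so
`RSeries ρ m ω` is the paper's `R_{m+1}`. -/
noncomputable def RSeries {Ω : Type*} (ρ : ℕ → Ω → ℝ) (m : ℕ) (ω : Ω) : ℝ≥0∞ :=
  ∑' k : ℕ, ∏ j ∈ Finset.Ico m (m + k + 1), ENNReal.ofReal (ρ j ω)

open Filter Finset Topology

/-- The paper's `R_{1,n} = ∑_{k=1}^n Π_{1,k}`, with the same index shift as `RSeries`. -/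
noncomputable def RPartial {Ω : Type*} (ρ : ℕ → Ω → ℝ) (n : ℕ) (ω : Ω) : ℝ≥0∞ :=
  ∑ k ∈ range n, ∏ j ∈ range (k + 1), ENNReal.ofReal (ρ j ω)

section Deterministic

variable {Ω : Type*}

lemma measurable_RSeries {m' : MeasurableSpace Ω} {ρ : ℕ → Ω → ℝ} {m : ℕ}
    (h : ∀ j, m ≤ j → Measurable[m'] (ρ j)) : Measurable[m'] (RSeries ρ m) :=
  .tsum fun _ => Finset.measurable_prod _ fun j hj =>
    ENNReal.measurable_ofReal.comp (h j (mem_Ico.mp hj).1)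

lemma RSeries_eq_RSeries_zero_shift (ρ : ℕ → Ω → ℝ) (m : ℕ) :
    RSeries ρ m = RSeries (fun j => ρ (m + j)) 0 := by
  ext ω
  refine tsum_congr fun k => ?_
  simp [prod_Ico_eq_prod_range, add_assoc]

lemma RPartial_ne_top (ρ : ℕ → Ω → ℝ) (n : ℕ) (ω : Ω) : RPartial ρ n ω ≠ ∞ :=
  ENNReal.sum_ne_top.2 fun _ _ => ENNReal.prod_ne_top fun _ _ => ENNReal.ofReal_ne_top

lemma prod_le_one_add_RPartial (ρ : ℕ → Ω → ℝ) (n : ℕ) (ω : Ω) :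
    ∏ j ∈ range n, ENNReal.ofReal (ρ j ω) ≤ 1 + RPartial ρ n ω := by
  cases n with
  | zero => simp
  | succ n =>
    exact (single_le_sum (f := fun k => ∏ j ∈ range (k + 1), ENNReal.ofReal (ρ j ω))
      (fun _ _ => zero_le) (self_mem_range_succ n)).trans le_add_self

lemma measurable_RPartial {m' : MeasurableSpace Ω} {ρ : ℕ → Ω → ℝ} {n : ℕ}
    (h : ∀ j < n, Measurable[m'] (ρ j)) : Measurable[m'] (RPartial ρ n) :=
  Finset.measurable_sum _ fun k hk => Finset.measurable_prod _ fun j hj =>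
    ENNReal.measurable_ofReal.comp (h j (by simp only [mem_range] at hk hj; omega))

lemma RSeries_zero_eq_RPartial_add (ρ : ℕ → Ω → ℝ) (n : ℕ) (ω : Ω) :
    RSeries ρ 0 ω =
      RPartial ρ n ω + (∏ j ∈ range n, ENNReal.ofReal (ρ j ω)) * RSeries ρ n ω := by
  have h0 : RSeries ρ 0 ω = ∑' k, ∏ j ∈ range (k + 1), ENNReal.ofReal (ρ j ω) := by
    simp only [RSeries, zero_add, range_eq_Ico]
  rw [h0, ← ENNReal.summable.sum_add_tsum_nat_add', RPartial, RSeries, ← ENNReal.tsum_mul_left]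
  congr 1
  refine tsum_congr fun k => ?_
  rw [prod_range_mul_prod_Ico _ (by omega), add_comm k n]

lemma RSeries_zero_lt_top_of_tendsto {ρ : ℕ → Ω → ℝ} {ω : Ω} {L : ℝ}
    (hpos : ∀ i, 0 < ρ i ω) (hL : L < 0)
    (h : Tendsto (fun k : ℕ => (k : ℝ)⁻¹ • ∑ i ∈ range k, Real.log (ρ i ω)) atTop (𝓝 L)) :
    RSeries ρ 0 ω < ∞ := by
  set a : ℕ → ℝ := fun k => ∏ i ∈ range k, ρ i ω
  have ha_nonneg k : 0 ≤ a k := prod_nonneg fun i _ => (hpos i).le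
  have ha_exp k : a k = Real.exp (∑ i ∈ range k, Real.log (ρ i ω)) := by
    rw [Real.exp_sum]
    exact prod_congr rfl fun i _ => (Real.exp_log (hpos i)).symm
  have ha_geom : ∀ᶠ k in atTop, ‖a k‖ ≤ Real.exp (L / 2) ^ k := by
    filter_upwards [h.eventually (gt_mem_nhds (show L < L / 2 by linarith)),
      eventually_gt_atTop 0] with k hk hk0
    rw [smul_eq_mul, inv_mul_lt_iff₀ (by positivity)] at hk
    rw [Real.norm_of_nonneg (ha_nonneg k), ha_exp, ← Real.exp_nat_mul, Real.exp_le_exp]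
    linarith
  have ha : Summable a := .of_norm_bounded_eventually_nat
    (summable_geometric_of_lt_one (Real.exp_pos _).le (Real.exp_lt_one_iff.2 (by linarith)))
    ha_geom
  have hR : RSeries ρ 0 ω = ∑' k, ENNReal.ofReal (a (k + 1)) := by
    simp only [RSeries, zero_add, ← range_eq_Ico, a,
      ENNReal.ofReal_prod_of_nonneg fun i _ => (hpos i).le]
  rw [hR, ← ENNReal.ofReal_tsum_of_nonneg (fun k => ha_nonneg _) ((summable_nat_add_iff 1).2 ha)]
  exact ENNReal.ofReal_lt_top

end Deterministic

lemma ENNReal.inv_four_mul_le_mul_sq_div_sq {p t w : ℝ≥0∞} (hp0 : p ≠ 0) (hp : p ≠ ∞)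
    (hw : w ≠ ∞) (ht : t ≠ 0) (h : t / p ≤ w) :
    (4 * p)⁻¹ ≤ p * w ^ 2 / (t + p * w) ^ 2 := by
  have htpw : t ≤ p * w := by rwa [ENNReal.div_le_iff hp0 hp, mul_comm] at h
  have hw0 : w ≠ 0 := by rintro rfl; simp_all
  have hpw2 : p * w ^ 2 ≠ 0 := mul_ne_zero hp0 (pow_ne_zero 2 hw0)
  calc (4 * p)⁻¹ = 1 * (p * w ^ 2) / (4 * p * (p * w ^ 2)) := by
        rw [ENNReal.mul_div_mul_right _ _ hpw2 (by finiteness), one_div]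
    _ = p * w ^ 2 / (p * w + p * w) ^ 2 := by ring_nf
    _ ≤ p * w ^ 2 / (t + p * w) ^ 2 := by gcongr

lemma ENNReal.inv_four_mul_mul_div_div {c p t : ℝ≥0∞} (hp0 : p ≠ 0) (hp : p ≠ ∞)
    (ht : t ≠ ∞) : (4 * p)⁻¹ * (c / (t / p)) = c / 4 * t⁻¹ := by
  rw [div_eq_mul_inv c (t / p), ENNReal.inv_div (.inr ht) (.inl hp0),
    ENNReal.mul_inv (.inl four_ne_zero) (.inl ENNReal.ofNat_ne_top),
    ← one_mul (c / 4 * t⁻¹), ← ENNReal.inv_mul_cancel hp0 hp, div_eq_mul_inv c, div_eq_mul_inv p]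
  ring

lemma measurable_biSup_comap {Ω ι β : Type*} [MeasurableSpace β] {f : ι → Ω → β} {S : Set ι}
    {j : ι} (hj : j ∈ S) : Measurable[⨆ i ∈ S, MeasurableSpace.comap (f i) ‹_›] (f j) :=
  .of_comap_le (le_iSup₂ (f := fun i (_ : i ∈ S) => MeasurableSpace.comap (f i) ‹_›) j hj)

namespace ProbabilityTheory

variable {Ω Ω' ι β γ δ : Type*} [MeasurableSpace Ω] [MeasurableSpace Ω'] {μ : Measure Ω}
  {ν : Measure Ω'} [MeasurableSpace β] [MeasurableSpace γ] [MeasurableSpace δ]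

lemma iIndepFun.identDistrib_pi {X : ι → Ω → β} {Y : ι → Ω' → β}
    (hX : ∀ i, Measurable (X i)) (hY : ∀ i, Measurable (Y i))
    (hXi : iIndepFun X μ) (hYi : iIndepFun Y ν) (h : ∀ i, IdentDistrib (X i) (Y i) μ ν) :
    IdentDistrib (fun ω i => X i ω) (fun ω i => Y i ω) μ ν where
  aemeasurable_fst := (measurable_pi_iff.2 hX).aemeasurable
  aemeasurable_snd := (measurable_pi_iff.2 hY).aemeasurable
  map_eq := by
    rw [hXi.map_fun_eq_infinitePi_map hX, hYi.map_fun_eq_infinitePi_map hY]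
    simp_rw [(h _).map_eq]

lemma iIndepFun.indepFun_of_measurable_biSup {f : ι → Ω → β} (hf : ∀ i, Measurable (f i))
    (h : iIndepFun f μ) {S T : Set ι} (hST : Disjoint S T) {X : Ω → γ} {Y : Ω → δ}
    (hX : Measurable[⨆ i ∈ S, MeasurableSpace.comap (f i) ‹_›] X)
    (hY : Measurable[⨆ i ∈ T, MeasurableSpace.comap (f i) ‹_›] Y) :
    IndepFun X Y μ :=
  indep_of_indep_of_le_left
    (indep_of_indep_of_le_right (indep_iSup_of_disjoint (fun i => (hf i).comap_le) h hST)
      hY.comap_le) hX.comap_le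

lemma IndepFun.lintegral_comp_eq_lintegral_lintegral [IsFiniteMeasure μ] {X : Ω → γ}
    {Y : Ω → δ} (hXY : IndepFun X Y μ) (hX : Measurable X) (hY : Measurable Y)
    {G : γ × δ → ℝ≥0∞} (hG : Measurable G) :
    ∫⁻ ω, G (X ω, Y ω) ∂μ = ∫⁻ ω, ∫⁻ ω', G (X ω, Y ω') ∂μ ∂μ := by
  rw [← lintegral_map hG (hX.prodMk hY),
    (indepFun_iff_map_prod_eq_prod_map_map hX.aemeasurable hY.aemeasurable).1 hXY,
    lintegral_prod _ hG.aemeasurable, lintegral_map hG.lintegral_prod_right' hX]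
  exact lintegral_congr fun ω => lintegral_map (hG.comp measurable_prodMk_left) hY

end ProbabilityTheory

lemma lintegral_inv_le_lintegral_mul_sq_div_sq {Ω : Type*} [MeasurableSpace Ω] {μ : Measure Ω}
    [IsFiniteMeasure μ] {P T W : Ω → ℝ≥0∞} {c : ℝ≥0∞}
    (hPm : Measurable P) (hTm : Measurable T) (hWm : Measurable W)
    (hindep : IndepFun (fun ω => (P ω, T ω)) W μ) (hP0 : ∀ᵐ ω ∂μ, P ω ≠ 0)
    (hPT : ∀ ω, P ω ≤ T ω) (hT_top : ∀ ω, T ω ≠ ∞)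
    (hW_top : ∀ᵐ ω ∂μ, W ω ≠ ∞) (htail : ∀ s, 1 ≤ s → s ≠ ∞ → c / s ≤ μ {ω | s ≤ W ω}) :
    c / 4 * ∫⁻ ω, (T ω)⁻¹ ∂μ ≤ ∫⁻ ω, P ω * W ω ^ 2 / (T ω + P ω * W ω) ^ 2 ∂μ := by
  have hP_top ω : P ω ≠ ∞ := ((hPT ω).trans_lt (hT_top ω).lt_top).ne
  set G : (ℝ≥0∞ × ℝ≥0∞) × ℝ≥0∞ → ℝ≥0∞ :=
    fun q => if q.1.2 / q.1.1 ≤ q.2 then (4 * q.1.1)⁻¹ else 0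
  have hG : Measurable G :=
    Measurable.ite (measurableSet_le (measurable_fst.snd.div measurable_fst.fst) measurable_snd)
      (measurable_const.mul measurable_fst.fst).inv measurable_const
  have hG_inner ω :
      ∫⁻ ω', G ((P ω, T ω), W ω') ∂μ = (4 * P ω)⁻¹ * μ {ω' | T ω / P ω ≤ W ω'} := by
    rw [← lintegral_indicator_const (measurableSet_le measurable_const hWm)]
    simp [G, Set.indicator_apply]
  have hG_le : ∀ᵐ ω ∂μ, G ((P ω, T ω), W ω) ≤ P ω * W ω ^ 2 / (T ω + P ω * W ω) ^ 2 := by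
    filter_upwards [hP0, hW_top] with ω hp hw
    simp only [G]
    split_ifs with h
    · exact ENNReal.inv_four_mul_le_mul_sq_div_sq hp (hP_top ω) hw
        (ne_bot_of_le_ne_bot hp (hPT ω)) h
    · exact zero_le
  have hG_inner_ge : ∀ᵐ ω ∂μ, c / 4 * (T ω)⁻¹ ≤ ∫⁻ ω', G ((P ω, T ω), W ω') ∂μ := by
    filter_upwards [hP0] with ω hp
    have hs1 : 1 ≤ T ω / P ω :=
      (ENNReal.le_div_iff_mul_le (.inl hp) (.inl (hP_top ω))).2 ((one_mul _).trans_le (hPT ω))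
    have hs_top : T ω / P ω ≠ ∞ := ENNReal.div_ne_top (hT_top ω) hp
    rw [hG_inner, ← ENNReal.inv_four_mul_mul_div_div hp (hP_top ω) (hT_top ω)]
    gcongr
    exact htail _ hs1 hs_top
  calc c / 4 * ∫⁻ ω, (T ω)⁻¹ ∂μ = ∫⁻ ω, c / 4 * (T ω)⁻¹ ∂μ :=
        (lintegral_const_mul _ hTm.inv).symm
    _ ≤ ∫⁻ ω, ∫⁻ ω', G ((P ω, T ω), W ω') ∂μ ∂μ := lintegral_mono_ae hG_inner_ge
    _ = ∫⁻ ω, G ((P ω, T ω), W ω) ∂μ :=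
        (hindep.lintegral_comp_eq_lintegral_lintegral (hPm.prodMk hTm) hWm hG).symm
    _ ≤ _ := lintegral_mono_ae hG_le

lemma lintegral_inv_one_add_ne_zero {Ω : Type*} [MeasurableSpace Ω] {μ : Measure Ω} [NeZero μ]
    {f : Ω → ℝ≥0∞} (hf : Measurable f) (hf_top : ∀ᵐ ω ∂μ, f ω < ∞) :
    ∫⁻ ω, (1 + f ω)⁻¹ ∂μ ≠ 0 := by
  rw [Ne, lintegral_eq_zero_iff (f := fun ω => (1 + f ω)⁻¹) (hf.const_add 1).inv]
  intro h0
  obtain ⟨ω, h1, h2⟩ := (h0.and hf_top).exists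
  exact (ENNReal.add_lt_top.2 ⟨ENNReal.one_lt_top, h2⟩).ne (ENNReal.inv_eq_zero.1 h1)

section RandomEnvironment

variable {Ω : Type*} [MeasurableSpace Ω] {μ : Measure Ω} {ρ : ℕ → Ω → ℝ}

lemma identDistrib_RSeries (hmeas : ∀ i, Measurable (ρ i)) (hindep : iIndepFun ρ μ)
    (hident : ∀ i, IdentDistrib (ρ i) (ρ 0) μ μ) (m : ℕ) :
    IdentDistrib (RSeries ρ m) (RSeries ρ 0) μ μ := by
  have hshift : IdentDistrib (fun ω j => ρ (m + j) ω) (fun ω j => ρ j ω) μ μ :=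
    (hindep.precomp (add_right_injective m)).identDistrib_pi (fun j => hmeas (m + j)) hmeas
      hindep fun j => (hident (m + j)).trans (hident j).symm
  rw [RSeries_eq_RSeries_zero_shift]
  exact hshift.comp (measurable_RSeries (ρ := fun j (x : ℕ → ℝ) => x j) fun j _ =>
    measurable_pi_apply j)

lemma ofReal_div_le_measure_le_RSeries (hmeas : ∀ i, Measurable (ρ i)) (hindep : iIndepFun ρ μ)
    (hident : ∀ i, IdentDistrib (ρ i) (ρ 0) μ μ) {C : ℝ}
    (htail : ∀ t : ℝ, 1 ≤ t →
      ENNReal.ofReal (C / t) ≤ μ {ω | ENNReal.ofReal t ≤ RSeries ρ 0 ω})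
    (m : ℕ) {s : ℝ≥0∞} (hs1 : 1 ≤ s) (hs : s ≠ ∞) :
    ENNReal.ofReal C / s ≤ μ {ω | s ≤ RSeries ρ m ω} := by
  have ht : 1 ≤ s.toReal := by simpa using ENNReal.toReal_mono hs hs1
  change _ ≤ μ (RSeries ρ m ⁻¹' Set.Ici s)
  rw [(identDistrib_RSeries hmeas hindep hident m).measure_mem_eq measurableSet_Ici,
    ← ENNReal.ofReal_toReal hs, ← ENNReal.ofReal_div_of_pos (by linarith)]
  exact htail _ ht

lemma indepFun_prod_RPartial_RSeries (hmeas : ∀ i, Measurable (ρ i)) (hindep : iIndepFun ρ μ)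
    (n : ℕ) :
    IndepFun (fun ω => (∏ j ∈ range n, ENNReal.ofReal (ρ j ω), 1 + RPartial ρ n ω))
      (RSeries ρ n) μ := by
  have hhead : ∀ j < n, Measurable[⨆ i ∈ Set.Iio n, MeasurableSpace.comap (ρ i) _] (ρ j) :=
    fun j hj => measurable_biSup_comap hj
  refine hindep.indepFun_of_measurable_biSup hmeas (Set.Iio_disjoint_Ici le_rfl)
    ((Finset.measurable_prod _ fun j hj => ENNReal.measurable_ofReal.comp
      (hhead j (mem_range.1 hj))).prodMk ((measurable_RPartial hhead).const_add 1))
    (measurable_RSeries fun j hj => measurable_biSup_comap hj)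

lemma ae_RSeries_zero_lt_top [IsProbabilityMeasure μ] (hpos : ∀ᵐ ω ∂μ, ∀ i, 0 < ρ i ω)
    (hindep : iIndepFun ρ μ) (hident : ∀ i, IdentDistrib (ρ i) (ρ 0) μ μ)
    (hlogint : Integrable (fun ω => Real.log (ρ 0 ω)) μ)
    (hlogneg : ∫ ω, Real.log (ρ 0 ω) ∂μ < 0) :
    ∀ᵐ ω ∂μ, RSeries ρ 0 ω < ∞ := by
  have hslln := strong_law_ae (fun i ω => Real.log (ρ i ω)) hlogint
    (fun i j hij => (hindep.indepFun hij).comp Real.measurable_log Real.measurable_log)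
    (fun i => (hident i).comp Real.measurable_log)
  filter_upwards [hslln, hpos] with ω hω hρ
  exact RSeries_zero_lt_top_of_tendsto hρ hlogneg hω

lemma ae_RSeries_lt_top [IsProbabilityMeasure μ] (hmeas : ∀ i, Measurable (ρ i))
    (hpos : ∀ᵐ ω ∂μ, ∀ i, 0 < ρ i ω) (hindep : iIndepFun ρ μ)
    (hident : ∀ i, IdentDistrib (ρ i) (ρ 0) μ μ)
    (hlogint : Integrable (fun ω => Real.log (ρ 0 ω)) μ)
    (hlogneg : ∫ ω, Real.log (ρ 0 ω) ∂μ < 0) (m : ℕ) :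
    ∀ᵐ ω ∂μ, RSeries ρ m ω < ∞ :=
  (identDistrib_RSeries hmeas hindep hident m).symm.ae_mem_snd measurableSet_Iio
    (ae_RSeries_zero_lt_top hpos hindep hident hlogint hlogneg)

lemma ofReal_div_four_mul_lintegral_inv_le [IsProbabilityMeasure μ]
    (hmeas : ∀ i, Measurable (ρ i)) (hpos : ∀ᵐ ω ∂μ, ∀ i, 0 < ρ i ω) (hindep : iIndepFun ρ μ)
    (hident : ∀ i, IdentDistrib (ρ i) (ρ 0) μ μ)
    (hlogint : Integrable (fun ω => Real.log (ρ 0 ω)) μ)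
    (hlogneg : ∫ ω, Real.log (ρ 0 ω) ∂μ < 0) {C : ℝ}
    (htail : ∀ t : ℝ, 1 ≤ t →
      ENNReal.ofReal (C / t) ≤ μ {ω | ENNReal.ofReal t ≤ RSeries ρ 0 ω}) (n : ℕ) :
    ENNReal.ofReal C / 4 * ∫⁻ ω, (1 + RPartial ρ n ω)⁻¹ ∂μ ≤
      ∫⁻ ω, (∏ j ∈ range n, ENNReal.ofReal (ρ j ω)) * RSeries ρ n ω ^ 2 /
        (1 + RSeries ρ 0 ω) ^ 2 ∂μ := by
  have hP0 : ∀ᵐ ω ∂μ, ∏ j ∈ range n, ENNReal.ofReal (ρ j ω) ≠ 0 := by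
    filter_upwards [hpos] with ω hω
    exact prod_ne_zero_iff.2 fun j _ => (ENNReal.ofReal_pos.2 (hω j)).ne'
  simp_rw [RSeries_zero_eq_RPartial_add ρ n, ← add_assoc]
  exact lintegral_inv_le_lintegral_mul_sq_div_sq
    (Finset.measurable_prod _ fun j _ => ENNReal.measurable_ofReal.comp (hmeas j))
    ((measurable_RPartial fun j _ => hmeas j).const_add 1)
    (measurable_RSeries fun j _ => hmeas j) (indepFun_prod_RPartial_RSeries hmeas hindep n) hP0
    (prod_le_one_add_RPartial ρ n) (fun ω => ENNReal.add_ne_top.2 ⟨ENNReal.one_ne_top,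
      RPartial_ne_top ρ n ω⟩)
    ((ae_RSeries_lt_top hmeas hpos hindep hident hlogint hlogneg n).mono fun _ h => h.ne)
    (fun s => ofReal_div_le_measure_le_RSeries hmeas hindep hident htail n)

end RandomEnvironment

/-- **Uniform term-wise lower bound.** Let `(ρ_x)_{x≥1}` be i.i.d. strictly positive
with `E[log ρ₁] ∈ (-∞,0)`, and suppose `P(R₁ ≥ t) ≥ C/t` for all `t ≥ 1` for some
constant `C > 0`. Then for every `n ≥ 1`,
`E[Π_{1,n} R_{n+1}² / (1 + R₁)²] ≥ (C/4) E[1/(1 + R₁)] > 0`. -/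
theorem term_lower_bound
    {Ω : Type*} [MeasurableSpace Ω] (μ : Measure Ω) [IsProbabilityMeasure μ]
    (ρ : ℕ → Ω → ℝ) (hmeas : ∀ i, Measurable (ρ i))
    (hpos : ∀ᵐ ω ∂μ, ∀ i, 0 < ρ i ω)
    (hindep : iIndepFun ρ μ)
    (hident : ∀ i, IdentDistrib (ρ i) (ρ 0) μ μ)
    (hlogint : Integrable (fun ω => Real.log (ρ 0 ω)) μ)
    (hlogneg : ∫ ω, Real.log (ρ 0 ω) ∂μ < 0)
    (C : ℝ) (hC : 0 < C)
    (htail : ∀ t : ℝ, 1 ≤ t →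
      ENNReal.ofReal (C / t) ≤ μ {ω | ENNReal.ofReal t ≤ RSeries ρ 0 ω}) :
    ∀ n : ℕ,
      ENNReal.ofReal (C / 4) * (∫⁻ ω, (1 + RSeries ρ 0 ω)⁻¹ ∂μ)
          ≤ ∫⁻ ω, (∏ j ∈ Finset.range (n + 1), ENNReal.ofReal (ρ j ω)) *
              (RSeries ρ (n + 1) ω) ^ 2 / (1 + RSeries ρ 0 ω) ^ 2 ∂μ ∧
        0 < ENNReal.ofReal (C / 4) * (∫⁻ ω, (1 + RSeries ρ 0 ω)⁻¹ ∂μ) := by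
  intro n
  refine ⟨?_, ENNReal.mul_pos (ENNReal.ofReal_pos.2 (by positivity)).ne'
    (lintegral_inv_one_add_ne_zero (measurable_RSeries fun j _ => hmeas j)
      (ae_RSeries_lt_top hmeas hpos hindep hident hlogint hlogneg 0))⟩
  calc ENNReal.ofReal (C / 4) * ∫⁻ ω, (1 + RSeries ρ 0 ω)⁻¹ ∂μ
      ≤ ENNReal.ofReal C / 4 * ∫⁻ ω, (1 + RPartial ρ (n + 1) ω)⁻¹ ∂μ := by
        rw [ENNReal.ofReal_div_of_pos four_pos, ENNReal.ofReal_ofNat]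
        gcongr with ω
        rw [RSeries_zero_eq_RPartial_add ρ (n + 1)]
        exact le_self_add
    _ ≤ _ := ofReal_div_four_mul_lintegral_inv_le hmeas hpos hindep hident hlogint hlogneg
        htail (n + 1)
end
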